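/- Let R be a relative m-cover and σ the involution swapping antipodes. Then χ_R·A₁ = m(q²+1)j − (q²+1)χ_{R^σ}, where A₁ is the 0-1 matrix on external lines with (ℓ,n)-entry 1 iff ℓ and n are not concurrent, n ≠ ℓ̄, and n is concurrent with ℓ̄. -/

import Mathlib

structure GenQuad (P L : Type*) (I : P → L → Prop) (s t : ℕ) : Prop where
  unique_line : ∀ ⦃p q : P⦄, p ≠ q → ∀ ⦃l m : L⦄, I p l → I q l → I p m → I q m → l = m
  point_lines : ∀ p : P, {l : L | I p l}.ncard = t + 1
  line_points : ∀ l : L, {p : P | I p l}.ncard = s + 1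
  gq : ∀ (p : P) (l : L), ¬ I p l → ∃! r : P, I r l ∧ ∃ m : L, I p m ∧ I r m

def Concurrent {P L : Type*} (I : P → L → Prop) (k l : L) : Prop :=
  k ≠ l ∧ ∃ p : P, I p k ∧ I p l

/-!
For `k ∈ R` the entry `A₁(k, n)` is `1` exactly when `k` meets the antipode `n̄`: a line
concurrent with both `n` and `k̄` cannot exist once every point lies on a `σ`-fixed line, and
every point does, because a double count shows that every point is collinear with a point of
`Γ'`, while lines through points of `Γ'` are fixed. So `χ_R A₁` counts the lines of `R` meeting
`n̄`. Each of the `q² + 1` points of `n̄` is external, hence on `m` lines of `R`, one of which is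
`n̄` itself exactly when `n ∈ R^σ`.
-/

theorem Set.ncard_mul_le_ncard_mul {α β : Type*} [Finite α] [Finite β] {A : Set α} {B : Set β}
    (r : α → β → Prop) {m n : ℕ} (hm : ∀ a ∈ A, m ≤ {b ∈ B | r a b}.ncard)
    (hn : ∀ b ∈ B, {a ∈ A | r a b}.ncard ≤ n) : A.ncard * m ≤ B.ncard * n := by
  classical
  lift A to Finset α using A.toFinite
  lift B to Finset β using B.toFinite
  rw [Set.ncard_coe_finset, Set.ncard_coe_finset]
  refine Finset.card_mul_le_card_mul r (fun a ha => ?_) fun b hb => ?_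
  · simpa [Finset.bipartiteAbove, ← Finset.coe_filter] using hm a ha
  · simpa [Finset.bipartiteBelow, ← Finset.coe_filter] using hn b hb

theorem Set.ncard_mul_eq_ncard_mul {α β : Type*} [Finite α] [Finite β] {A : Set α} {B : Set β}
    (r : α → β → Prop) {m n : ℕ} (hm : ∀ a ∈ A, {b ∈ B | r a b}.ncard = m)
    (hn : ∀ b ∈ B, {a ∈ A | r a b}.ncard = n) : A.ncard * m = B.ncard * n :=
  (Set.ncard_mul_le_ncard_mul r (fun a ha => (hm a ha).ge) fun b hb => (hn b hb).le).antisymm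
    (Set.ncard_mul_le_ncard_mul (Function.swap r) (fun b hb => (hn b hb).ge)
      fun a ha => (hm a ha).le)

def PointsCollinear {P L : Type*} (I : P → L → Prop) (a b : P) : Prop :=
  ∃ l, I a l ∧ I b l

theorem PointsCollinear.symm {P L : Type*} {I : P → L → Prop} {a b : P}
    (h : PointsCollinear I a b) : PointsCollinear I b a :=
  let ⟨l, ha, hb⟩ := h
  ⟨l, hb, ha⟩

namespace GenQuad

section Generic

variable {P L : Type*} {I : P → L → Prop} {s t : ℕ}

theorem pointsCollinear_self (h : GenQuad P L I s t) (a : P) : PointsCollinear I a a := by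
  obtain ⟨l, hl⟩ : {l | I a l}.Nonempty :=
    Set.nonempty_of_ncard_ne_zero (by rw [h.point_lines a]; omega)
  exact ⟨l, hl, hl⟩

theorem exists_incident_ne (h : GenQuad P L I s t) (hs : 1 ≤ s) (l : L) (a : P) :
    ∃ b, I b l ∧ b ≠ a :=
  Set.exists_ne_of_one_lt_ncard (s := {b | I b l}) (by rw [h.line_points l]; omega) a

theorem eq_of_incident_of_incident (h : GenQuad P L I s t) {a b : P} {l m : L} (hlm : l ≠ m)
    (hal : I a l) (ham : I a m) (hbl : I b l) (hbm : I b m) : a = b :=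
  by_contra fun hab => hlm (h.unique_line hab hal hbl ham hbm)

theorem eq_of_pointsCollinear (h : GenQuad P L I s t) {u a b : P} {l : L} (hul : ¬ I u l)
    (hal : I a l) (hbl : I b l) (hua : PointsCollinear I u a) (hub : PointsCollinear I u b) :
    a = b :=
  (h.gq u l hul).unique ⟨hal, hua⟩ ⟨hbl, hub⟩

theorem ncard_incident_eq_one (h : GenQuad P L I s t) {x u : P} (hux : u ≠ x) {S : Set L}
    (hS : ∀ l ∈ S, I x l) {l : L} (hl : l ∈ S) (hul : I u l) : {k ∈ S | I u k}.ncard = 1 :=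
  Set.ncard_eq_one.2 ⟨l, Set.ext fun k =>
    ⟨fun ⟨hk, huk⟩ => h.unique_line hux huk (hS k hk) hul (hS l hl), fun hk => hk ▸ ⟨hl, hul⟩⟩⟩

variable [Finite P] [Finite L]

theorem ncard_points_on_lines_through (h : GenQuad P L I s t) {x : P} {S : Set L}
    (hS : ∀ l ∈ S, I x l) : {u | u ≠ x ∧ ∃ l ∈ S, I u l}.ncard = S.ncard * s := by
  have hline (l : L) (hl : l ∈ S) : {u | (u ≠ x ∧ ∃ k ∈ S, I u k) ∧ I u l}.ncard = s := by
    have : {u | (u ≠ x ∧ ∃ k ∈ S, I u k) ∧ I u l} = {u | I u l} \ {x} := by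
      ext u
      exact ⟨fun ⟨⟨hux, _⟩, hul⟩ => ⟨hul, hux⟩, fun ⟨hul, hux⟩ => ⟨⟨hux, l, hl, hul⟩, hul⟩⟩
    rw [this, Set.ncard_sdiff_singleton_of_mem (show x ∈ {u | I u l} from hS l hl), h.line_points,
      Nat.add_sub_cancel]
  simpa using Set.ncard_mul_eq_ncard_mul (A := {u | u ≠ x ∧ ∃ l ∈ S, I u l}) (fun u l => I u l)
    (fun u ⟨hux, l, hl, hul⟩ => h.ncard_incident_eq_one hux hS hl hul) hline

theorem ncard_perp (h : GenQuad P L I s t) (x : P) :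
    {u | u ≠ x ∧ PointsCollinear I u x}.ncard = (t + 1) * s := by
  rw [← h.point_lines x, ← h.ncard_points_on_lines_through (S := {l | I x l}) fun _ hl => hl]
  simp only [PointsCollinear, Set.mem_ofPred_eq, and_comm]

theorem ncard_commonNeighbours (h : GenQuad P L I s t) {x z : P}
    (hxz : ¬ PointsCollinear I x z) :
    {u | PointsCollinear I u x ∧ PointsCollinear I u z}.ncard = t + 1 := by
  have hfoot (l : L) (hxl : I x l) :
      {u | (PointsCollinear I u x ∧ PointsCollinear I u z) ∧ I u l}.ncard = 1 := by
    obtain ⟨r, ⟨hrl, hzr⟩, hr⟩ := h.gq z l fun hzl => hxz ⟨l, hxl, hzl⟩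
    refine Set.ncard_eq_one.2 ⟨r, Set.ext fun u => ⟨fun ⟨⟨_, huz⟩, hul⟩ => ?_, ?_⟩⟩
    · exact hr u ⟨hul, huz.symm⟩
    · rintro rfl
      exact ⟨⟨⟨l, hrl, hxl⟩, PointsCollinear.symm hzr⟩, hrl⟩
  have := Set.ncard_mul_eq_ncard_mul
    (A := {u | PointsCollinear I u x ∧ PointsCollinear I u z}) (B := {l | I x l})
    (fun u l => I u l)
    (fun u ⟨⟨l, hul, hxl⟩, huz⟩ => h.ncard_incident_eq_one (by rintro rfl; exact hxz huz)
      (fun _ hk => hk) hxl hul) hfoot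
  rwa [mul_one, mul_one, h.point_lines] at this

theorem ncard_farNeighbours (h : GenQuad P L I s t) {x v : P} (hvx : v ≠ x)
    (hv : PointsCollinear I v x) :
    {u | ¬ PointsCollinear I u x ∧ PointsCollinear I u v}.ncard = t * s := by
  obtain ⟨l, hvl, hxl⟩ := hv
  have : {u | ¬ PointsCollinear I u x ∧ PointsCollinear I u v}
      = {u | u ≠ v ∧ ∃ k ∈ {k | I v k} \ {l}, I u k} := by
    ext u
    constructor
    · rintro ⟨hux, k, huk, hvk⟩
      refine ⟨?_, k, ⟨hvk, ?_⟩, huk⟩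
      · rintro rfl
        exact hux ⟨l, hvl, hxl⟩
      · rintro rfl
        exact hux ⟨k, huk, hxl⟩
    · rintro ⟨huv, k, ⟨hvk, hkl⟩, huk⟩
      refine ⟨fun hux => huv ?_, k, huk, hvk⟩
      have hxk : ¬ I x k := fun hxk => hkl (h.unique_line hvx hvk hxk hvl hxl)
      exact h.eq_of_pointsCollinear hxk huk hvk hux.symm ⟨l, hxl, hvl⟩
  rw [this, h.ncard_points_on_lines_through fun _ hk => hk.1,
    Set.ncard_sdiff_singleton_of_mem (show l ∈ {k | I v k} from hvl), h.point_lines,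
    Nat.add_sub_cancel]

theorem card_points (h : GenQuad P L I s t) (x : P) : Nat.card P = (s + 1) * (s * t + 1) := by
  set far := {u | ¬ PointsCollinear I u x}
  have hfar : far.ncard * (t + 1) = ((t + 1) * s) * (t * s) := by
    rw [← h.ncard_perp x]
    refine Set.ncard_mul_eq_ncard_mul (PointsCollinear I) (fun u hu => ?_)
      fun v ⟨hvx, hv⟩ => h.ncard_farNeighbours hvx hv
    rw [← h.ncard_commonNeighbours fun hxu => hu hxu.symm]
    congr 1
    ext v
    refine ⟨fun ⟨⟨_, hvx⟩, huv⟩ => ⟨hvx, huv.symm⟩, fun ⟨hvx, hvu⟩ => ⟨⟨?_, hvx⟩, hvu.symm⟩⟩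
    rintro rfl
    exact hu hvu.symm
  have hnear : {u | PointsCollinear I u x} = insert x {u | u ≠ x ∧ PointsCollinear I u x} := by
    ext u
    by_cases hux : u = x
    · simp [hux, h.pointsCollinear_self x]
    · simp [hux]
  have hfar' : far.ncard = s * s * t :=
    Nat.eq_of_mul_eq_mul_right (Nat.succ_pos t) (hfar.trans (by ring : _ = s * s * t * (t + 1)))
  rw [← Set.ncard_add_ncard_compl {u | PointsCollinear I u x}]
  change _ + far.ncard = _
  rw [hnear, Set.ncard_insert_of_notMem (fun hx => hx.1 rfl), h.ncard_perp, hfar']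
  ring

open scoped Classical in
theorem ncard_concurrent_add (h : GenQuad P L I s t) {R : Set L} {m : ℕ} {l : L}
    (hR : ∀ x, I x l → {k ∈ R | I x k}.ncard = m) :
    {k ∈ R | Concurrent I l k}.ncard + (s + 1) * (if l ∈ R then 1 else 0) = (s + 1) * m := by
  have hfibre (x : P) (hxl : I x l) :
      {k | k ∈ {k ∈ R | Concurrent I l k} ∧ I x k}.ncard + (if l ∈ R then 1 else 0) = m := by
    have : {k | k ∈ {k ∈ R | Concurrent I l k} ∧ I x k} = {k ∈ R | I x k} \ {l} := by
      ext k
      exact ⟨fun ⟨⟨hk, hlk, _⟩, hxk⟩ => ⟨⟨hk, hxk⟩, Ne.symm hlk⟩,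
        fun ⟨⟨hk, hxk⟩, hkl⟩ => ⟨⟨hk, Ne.symm hkl, x, hxl, hxk⟩, hxk⟩⟩
    rw [this, ← hR x hxl]
    split_ifs with hl
    · exact Set.ncard_sdiff_singleton_add_one ⟨hl, hxl⟩
    · rw [Set.sdiff_singleton_eq_self fun hl' => hl hl'.1, add_zero]
  obtain ⟨x, hxl⟩ : {x | I x l}.Nonempty :=
    Set.nonempty_of_ncard_ne_zero (by rw [h.line_points l]; omega)
  have hcount := Set.ncard_mul_eq_ncard_mul (A := {x | I x l})
    (B := {k ∈ R | Concurrent I l k}) (fun x k => I x k)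
    (m := m - if l ∈ R then 1 else 0) (n := 1) (fun x hxl => by have := hfibre x hxl; omega)
    fun k ⟨_, hlk, p, hpl, hpk⟩ => Set.ncard_eq_one.2 ⟨p, Set.ext fun y =>
      ⟨fun ⟨hyl, hyk⟩ => h.eq_of_incident_of_incident hlk hyl hyk hpl hpk,
        fun hy => hy ▸ ⟨hpl, hpk⟩⟩⟩
  have hx := hfibre x hxl
  rw [h.line_points, mul_one] at hcount
  rw [← hcount, ← mul_add, Nat.sub_add_cancel (by omega)]

end Generic

section Involution

variable {P L : Type*} {I : P → L → Prop} {s t : ℕ} {σP : P ≃ P} {σL : L ≃ L}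

theorem concurrent_map_iff (hσI : ∀ p l, I p l ↔ I (σP p) (σL l)) {k l : L} :
    Concurrent I (σL k) (σL l) ↔ Concurrent I k l := by
  refine and_congr σL.injective.ne_iff ⟨fun ⟨p, hpk, hpl⟩ => ⟨σP.symm p, ?_, ?_⟩,
    fun ⟨p, hpk, hpl⟩ => ⟨σP p, (hσI p k).1 hpk, (hσI p l).1 hpl⟩⟩
  · rwa [hσI, σP.apply_symm_apply]
  · rwa [hσI, σP.apply_symm_apply]

theorem map_eq_self_of_incident_of_map_eq_self (h : GenQuad P L I s t) (hs : 1 ≤ s)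
    (hσI : ∀ p l, I p l ↔ I (σP p) (σL l)) (hfixed : ∀ x, ∃ l, I x l ∧ σL l = l) {p : P}
    {k : L} (hp : σP p = p) (hpk : I p k) : σL k = k := by
  by_contra hk
  have hpσk : I p (σL k) := hp ▸ (hσI p k).1 hpk
  obtain ⟨y, hyk, hyp⟩ := h.exists_incident_ne hs k p
  have hσyσk : I (σP y) (σL k) := (hσI y k).1 hyk
  obtain ⟨l, hyl, hl⟩ := hfixed y
  have hσyl : I (σP y) l := hl ▸ (hσI y l).1 hyl
  have hpl : ¬ I p l := fun hpl => hk (h.unique_line hyp hyl hpl hyk hpk ▸ hl)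
  refine hyp (h.eq_of_incident_of_incident (Ne.symm hk) hyk ?_ hpk hpσk)
  rwa [← h.eq_of_pointsCollinear hpl hσyl hyl ⟨σL k, hpσk, hσyσk⟩ ⟨k, hpk, hyk⟩]

theorem not_concurrent_map_of_concurrent (h : GenQuad P L I s t) (hs : 1 ≤ s)
    (hσI : ∀ p l, I p l ↔ I (σP p) (σL l)) (hσL : ∀ l, σL (σL l) = l)
    (hfixed : ∀ x, ∃ l, I x l ∧ σL l = l) {k n : L} (hk : σL k ≠ k) (hn : σL n ≠ n)
    (hkn : Concurrent I k n) : ¬ Concurrent I n (σL k) := by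
  obtain ⟨-, p, hpk, hpn⟩ := hkn
  rintro ⟨-, q, hqn, hqk⟩
  have hσp : p ≠ σP p := fun hp =>
    hk (h.map_eq_self_of_incident_of_map_eq_self hs hσI hfixed hp.symm hpk)
  have hσpσk : I (σP p) (σL k) := (hσI p k).1 hpk
  have hσpn : ¬ I (σP p) n := fun hσpn => hn <| Eq.symm <| h.unique_line hσp hpn hσpn
    ((hσI p (σL n)).2 (by rwa [hσL])) ((hσI p n).1 hpn)
  obtain ⟨l, hpl, hl⟩ := hfixed p
  obtain rfl : q = p :=
    h.eq_of_pointsCollinear hσpn hqn hpn ⟨σL k, hσpσk, hqk⟩ ⟨l, hl ▸ (hσI p l).1 hpl, hpl⟩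
  exact hk (h.unique_line hσp hqk hσpσk hpk (by simpa [hσL] using (hσI q (σL k)).1 hqk))

end Involution

section Subquadrangle

variable {P L : Type*} {I : P → L → Prop} {s s' t : ℕ} {P' : Set P} {L' : Set L}

theorem ncard_points_on_subLine (hsub : GenQuad P' L' (fun p l => I p.1 l.1) s' t) {l : L}
    (hl : l ∈ L') : {p ∈ P' | I p l}.ncard = s' + 1 := by
  rw [← hsub.line_points ⟨l, hl⟩, ← Set.ncard_image_of_injective _ Subtype.val_injective]
  congr 1
  ext p
  exact ⟨fun ⟨hp, hpl⟩ => ⟨⟨p, hp⟩, hpl, rfl⟩, fun ⟨p', hpl, hp⟩ => hp ▸ ⟨p'.2, hpl⟩⟩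

theorem exists_pair_on_subLine (hsub : GenQuad P' L' (fun p l => I p.1 l.1) s' t)
    (hs' : 1 ≤ s') {l : L} (hl : l ∈ L') :
    ∃ a ∈ P', ∃ b ∈ P', a ≠ b ∧ I a l ∧ I b l := by
  have hcard := hsub.ncard_points_on_subLine hl
  obtain ⟨a, ⟨ha, hal⟩, b, ⟨hb, hbl⟩, hab⟩ :=
    (Set.one_lt_ncard (Set.finite_of_ncard_pos (s := {p ∈ P' | I p l}) (by omega))).1
      (by omega)
  exact ⟨a, ha, b, hb, hab, hal, hbl⟩

variable [Finite P] [Finite L]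

/-- Two non-collinear points of `P'` have `t + 1` common neighbours in both quadrangles, so all
of them lie in `P'`. -/
theorem mem_of_pointsCollinear_of_pointsCollinear (h : GenQuad P L I s t)
    (hsub : GenQuad P' L' (fun p l => I p.1 l.1) s' t) {r₁ r₂ u : P} (hr₁ : r₁ ∈ P')
    (hr₂ : r₂ ∈ P') (hr : ¬ PointsCollinear I r₁ r₂) (hu₁ : PointsCollinear I u r₁)
    (hu₂ : PointsCollinear I u r₂) : u ∈ P' := by
  set N := {v : P' | PointsCollinear (fun (p : P') (l : L') => I p.1 l.1) v ⟨r₁, hr₁⟩ ∧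
    PointsCollinear (fun (p : P') (l : L') => I p.1 l.1) v ⟨r₂, hr₂⟩}
  have hsubset : Subtype.val '' N ⊆ {v | PointsCollinear I v r₁ ∧ PointsCollinear I v r₂} := by
    rintro _ ⟨v, ⟨⟨l₁, hv₁, hr₁⟩, ⟨l₂, hv₂, hr₂⟩⟩, rfl⟩
    exact ⟨⟨l₁, hv₁, hr₁⟩, ⟨l₂, hv₂, hr₂⟩⟩
  have hN : N.ncard = t + 1 :=
    hsub.ncard_commonNeighbours fun ⟨l, h₁, h₂⟩ => hr ⟨l, h₁, h₂⟩
  have heq := Set.eq_of_subset_of_ncard_le hsubset (by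
    rw [h.ncard_commonNeighbours hr, Set.ncard_image_of_injective _ Subtype.val_injective, hN])
  have hu : u ∈ {v | PointsCollinear I v r₁ ∧ PointsCollinear I v r₂} := ⟨hu₁, hu₂⟩
  obtain ⟨v, -, rfl⟩ := heq ▸ hu
  exact v.2

/-- The points of `P'` collinear with an outside point `u` all lie on one line through `u`. -/
theorem ncard_pointsCollinear_le (h : GenQuad P L I s t)
    (hsub : GenQuad P' L' (fun p l => I p.1 l.1) s' t) (hs' : 1 ≤ s')
    (hlines : ∀ p ∈ P', ∀ l : L, I p l → l ∈ L') {u : P} (hu : u ∉ P') :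
    {r ∈ P' | PointsCollinear I u r}.ncard ≤ s' + 1 := by
  rcases Set.eq_empty_or_nonempty {r ∈ P' | PointsCollinear I u r} with
    hempty | ⟨r₁, hr₁, l₁, hul₁, hr₁l₁⟩
  · simp [hempty]
  refine (hsub.ncard_points_on_subLine (hlines r₁ hr₁ l₁ hr₁l₁)).symm ▸
    Set.ncard_le_ncard (fun r ⟨hr, l₂, hul₂, hrl₂⟩ => ⟨hr, ?_⟩)
  by_contra hrl₁
  have hr₁l₂ : ¬ I r₁ l₂ := fun hr₁l₂ => hrl₁
    (h.unique_line (fun hr₁u => hu (by rwa [← hr₁u])) hr₁l₂ hul₂ hr₁l₁ hul₁ ▸ hrl₂)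
  obtain ⟨c, hc, hcl₂, hr₁c⟩ : ∃ c ∈ P', I c l₂ ∧ ¬ PointsCollinear I r₁ c := by
    obtain ⟨a, ha, b, hb, hab, hal, hbl⟩ := hsub.exists_pair_on_subLine hs' (hlines r hr l₂ hrl₂)
    by_contra! hcol
    exact hab (h.eq_of_pointsCollinear hr₁l₂ hal hbl (hcol a ha hal) (hcol b hb hbl))
  exact hu (h.mem_of_pointsCollinear_of_pointsCollinear hsub hr₁ hc hr₁c ⟨l₁, hul₁, hr₁l₁⟩
    ⟨l₂, hul₂, hcl₂⟩)

/-- Double counting pairs `(r, u)` with `r ∈ P'` and `u ∈ x^⊥ \ {x}` collinear: if `x` saw no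
point of `P'`, then `|P'| (t + 1) ≤ (t + 1) s (s' + 1)`, contradicting `|P'| = (s'+1)(s't+1)`. -/
theorem exists_mem_pointsCollinear (h : GenQuad P L I s t)
    (hsub : GenQuad P' L' (fun p l => I p.1 l.1) s' t) (hs' : 1 ≤ s') (hss' : s ≤ s' * t)
    (hP' : P'.Nonempty) (hlines : ∀ p ∈ P', ∀ l : L, I p l → l ∈ L') (x : P) :
    ∃ r ∈ P', PointsCollinear I x r := by
  by_contra! hx
  have hle := Set.ncard_mul_le_ncard_mul (B := {u | u ≠ x ∧ PointsCollinear I u x})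
    (m := t + 1) (n := s' + 1) (fun r u => PointsCollinear I u r)
    (fun r hr => by
      refine (h.ncard_commonNeighbours (hx r hr)).symm.trans_le (Set.ncard_le_ncard ?_)
      rintro u ⟨hux, hur⟩
      exact ⟨⟨by rintro rfl; exact hx r hr hur, hux⟩, hur⟩)
    fun u ⟨_, hux⟩ => h.ncard_pointsCollinear_le hsub hs' hlines fun hu => hx u hu hux.symm
  obtain ⟨p, hp⟩ := hP'
  rw [h.ncard_perp, ← Nat.card_coe_set_eq, hsub.card_points ⟨p, hp⟩] at hle
  nlinarith

theorem exists_incident_map_eq_self {σP : P ≃ P} {σL : L ≃ L} (h : GenQuad P L I s t)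
    (hsub : GenQuad P' L' (fun p l => I p.1 l.1) s' t) (hs' : 1 ≤ s') (hss' : s ≤ s' * t)
    (hP' : P'.Nonempty) (hlines : ∀ p ∈ P', ∀ l : L, I p l → l ∈ L')
    (hσI : ∀ p l, I p l ↔ I (σP p) (σL l)) (hσfix : ∀ p ∈ P', σP p = p) (x : P) :
    ∃ l, I x l ∧ σL l = l := by
  obtain ⟨r, hr, l, hxl, hrl⟩ := h.exists_mem_pointsCollinear hsub hs' hss' hP' hlines x
  obtain ⟨a, ha, b, hb, hab, hal, hbl⟩ := hsub.exists_pair_on_subLine hs' (hlines r hr l hrl)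
  refine ⟨l, hxl, h.unique_line hab ?_ ?_ hal hbl⟩
  · simpa [hσfix a ha] using (hσI a l).1 hal
  · simpa [hσfix b hb] using (hσI b l).1 hbl

end Subquadrangle

end GenQuad

open scoped Classical in
theorem statement_15_general {P L : Type*} [Fintype P] [Fintype L] {I : P → L → Prop} {q m : ℕ}
    (hq : 2 ≤ q)
    (hΓ : GenQuad P L I (q ^ 2) q)
    (P' : Set P) (L' : Set L) (hPne : P'.Nonempty)
    (hsub : GenQuad P' L' (fun p l => I p.1 l.1) q q)
    (hlines : ∀ p ∈ P', ∀ l : L, I p l → l ∈ L')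
    (σP : P ≃ P) (σL : L ≃ L)
    (hσI : ∀ (p : P) (l : L), I p l ↔ I (σP p) (σL l))
    (hσL2 : ∀ l, σL (σL l) = l)
    (hσfix : ∀ p ∈ P', σP p = p)
    (hσmoveL : ∀ l : L, (∀ p ∈ P', ¬ I p l) → σL l ≠ l)
    (R : Set L) (hRext : ∀ l ∈ R, ∀ p ∈ P', ¬ I p l)
    (hcover : ∀ p : P, p ∉ P' → {l ∈ R | I p l}.ncard = m) :
    ∀ n : L, (∀ p ∈ P', ¬ I p n) →
      (∑ k : L, (if k ∈ R then (1 : ℝ) else 0) *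
          (if (∀ p ∈ P', ¬ I p k) ∧ ¬ Concurrent I k n ∧ n ≠ σL k ∧
              Concurrent I n (σL k) then (1 : ℝ) else 0))
        = m * (q ^ 2 + 1) - (q ^ 2 + 1) * (if n ∈ σL '' R then (1 : ℝ) else 0) := by
  intro n hn
  have hfixed := hΓ.exists_incident_map_eq_self hsub (by omega) (sq q).le hPne hlines
    hσI hσfix
  have hσn : ∀ p ∈ P', ¬ I p (σL n) := fun p hp hpn =>
    hn p hp (by simpa [hσfix p hp, hσL2] using (hσI p (σL n)).1 hpn)
  have hterm (k : L) : (k ∈ R ∧ (∀ p ∈ P', ¬ I p k) ∧ ¬ Concurrent I k n ∧ n ≠ σL k ∧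
      Concurrent I n (σL k)) ↔ k ∈ R ∧ Concurrent I (σL n) k := by
    have hconc : Concurrent I (σL n) k ↔ Concurrent I n (σL k) := by
      simpa only [hσL2] using GenQuad.concurrent_map_iff hσI (k := n) (l := σL k)
    rw [hconc]
    refine and_congr_right fun hk => ⟨fun hc => hc.2.2.2, fun hc =>
      ⟨hRext k hk, fun hkn => ?_, hc.1, hc⟩⟩
    exact hΓ.not_concurrent_map_of_concurrent (Nat.one_le_pow _ _ (by omega)) hσI hσL2 hfixed
      (hσmoveL k (hRext k hk)) (hσmoveL n hn) hkn hc
  have hmem : n ∈ σL '' R ↔ σL n ∈ R :=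
    ⟨by rintro ⟨k, hk, rfl⟩; rwa [hσL2], fun h => ⟨σL n, h, hσL2 n⟩⟩
  have hcount := hΓ.ncard_concurrent_add (R := R) fun x hx => hcover x fun hxP => hσn x hxP hx
  simp_rw [ite_zero_mul_ite_zero, mul_one, hterm, Finset.sum_boole, hmem]
  rw [← Set.toFinset_ofPred, ← Set.ncard_eq_toFinset_card']
  have hcount_real := congrArg (Nat.cast : ℕ → ℝ) hcount
  push_cast at hcount_real
  split_ifs at hcount_real ⊢ <;> linarith

open scoped Classical in
/-- If `R` is a relative `m`-cover and `σ = (σP, σL)` the involution swapping antipodes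
(`σL k` is the antipode of an external line `k`), then
`χ_R · A₁ = m(q²+1) j - (q²+1) χ_{R^σ}` on external lines, where `A₁` is the 0-1 matrix
with `(k,n)`-entry 1 iff `k` and `n` are not concurrent, `n` is not the antipode of `k`,
and `n` is concurrent with the antipode of `k`. -/
theorem statement_15 {P L : Type*} [Fintype P] [Fintype L] {I : P → L → Prop} {q m : ℕ}
    (hq : 2 ≤ q)
    (hΓ : GenQuad P L I (q ^ 2) q)
    (P' : Set P) (L' : Set L) (hPne : P'.Nonempty)
    (hPproper : P' ≠ Set.univ) (hLproper : L' ≠ Set.univ)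
    (hsub : GenQuad P' L' (fun p l => I p.1 l.1) q q)
    (hlines : ∀ p ∈ P', ∀ l : L, I p l → l ∈ L')
    (σP : P ≃ P) (σL : L ≃ L)
    (hσI : ∀ (p : P) (l : L), I p l ↔ I (σP p) (σL l))
    (hσP2 : ∀ p, σP (σP p) = p) (hσL2 : ∀ l, σL (σL l) = l)
    (hσfix : ∀ p ∈ P', σP p = p)
    (hσmoveL : ∀ l : L, (∀ p ∈ P', ¬ I p l) → σL l ≠ l)
    (R : Set L) (hRext : ∀ l ∈ R, ∀ p ∈ P', ¬ I p l)
    (hcover : ∀ p : P, p ∉ P' → {l ∈ R | I p l}.ncard = m) :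
    ∀ n : L, (∀ p ∈ P', ¬ I p n) →
      (∑ k : L, (if k ∈ R then (1 : ℝ) else 0) *
          (if (∀ p ∈ P', ¬ I p k) ∧ ¬ Concurrent I k n ∧ n ≠ σL k ∧
              Concurrent I n (σL k) then (1 : ℝ) else 0))
        = m * (q ^ 2 + 1) - (q ^ 2 + 1) * (if n ∈ σL '' R then (1 : ℝ) else 0) :=
  statement_15_general hq hΓ P' L' hPne hsub hlines σP σL hσI hσL2 hσfix hσmoveL R hRext hcover
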